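/- Let p be a prime with p ≡ 7 (mod 8), let t ∈ F_p with t ≠ 0, and let E be the elliptic curve y² = x(x−1)(x+t²) over F_p. If E is supersingular, then the 2-torsion point Q₁ = (1, 0) lies in [2]E(F_p), i.e., there exists P ∈ E(F_p) with [2]P = Q₁. -/

import Mathlib

open WeierstrassCurve

/-- The elliptic curve `y² = x(x-1)(x+t²)`, i.e. `y² = x³ + (t²-1)x² - t²x`. -/
def TCurve {F : Type} [CommRing F] (t : F) : WeierstrassCurve F :=
  ⟨0, t ^ 2 - 1, 0, -t ^ 2, 0⟩

/-- A Weierstrass curve over a finite field of characteristic `p` is supersingular if the number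
of its rational points (including the point at infinity) is congruent to `1` modulo `p`. -/
def IsSupersingular (p : ℕ) {F : Type} [Field F] (W : WeierstrassCurve F) : Prop :=
  Nat.card W.toAffine.Point ≡ 1 [MOD p]

/-!
If `#E(𝔽_p) ≡ 1 (mod p)`, the trivial bound `#E(𝔽_p) ≤ 2p + 1` and the rational 2-torsion point
`(1, 0)` force `#E(𝔽_p) = p + 1`, which is divisible by 8. Since `#E[2] ≤ 4`, the subgroup
`[2]E(𝔽_p)` has even order and so contains a point of order two. Every double `(a, b)` has both
`a` and `a - 1` square; as `-1` is not a square mod `p`, this rules out `(0, 0)` and `(-t², 0)`,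
leaving `(1, 0)`.
-/

theorem exists_addOrderOf_two_nsmul_eq_two {G : Type*} [AddCommGroup G] [Finite G]
    (h : 2 * Nat.card (nsmulAddMonoidHom 2 : G →+ G).ker ∣ Nat.card G) :
    ∃ P : G, addOrderOf (2 • P) = 2 := by
  set φ : G →+ G := nsmulAddMonoidHom 2
  have hcard : Nat.card G = Nat.card φ.range * Nat.card φ.ker := by
    rw [φ.ker.card_eq_card_quotient_mul_card_addSubgroup,
      Nat.card_congr (QuotientAddGroup.quotientKerEquivRange φ).toEquiv]
  have hrange : 2 ∣ Nat.card φ.range := by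
    rwa [hcard, mul_dvd_mul_iff_right Nat.card_pos.ne'] at h
  obtain ⟨Q, hQ⟩ := exists_prime_addOrderOf_dvd_card' 2 hrange
  obtain ⟨P, hP⟩ := Q.2
  refine ⟨P, ?_⟩
  rw [← nsmulAddMonoidHom_apply, hP, AddSubgroup.addOrderOf_coe, hQ]

theorem Nat.eq_add_one_of_modEq_one {N p : ℕ} (hp : 1 < p) (hN : N ≡ 1 [MOD p]) (h2 : 2 ∣ N)
    (hle : N ≤ 2 * p + 1) : N = p + 1 := by
  have hmod : N % p = 1 := Eq.trans hN (Nat.mod_eq_of_lt hp)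
  have hdiv := Nat.div_add_mod N p
  have hk : N / p ≤ 2 := by
    by_contra! hk
    nlinarith
  interval_cases N / p <;> omega

namespace WeierstrassCurve.Affine

variable {F : Type*} [Field F] (W : WeierstrassCurve.Affine F)

/-- The two points over a given `x` are told apart by comparing `y` with `negY x y` in an
arbitrary linear order on `F`. -/
theorem Point.exists_injective_option_prod_bool [Finite F] :
    ∃ f : W.Point → Option (F × Bool), Function.Injective f := by
  let e := Finite.equivFin F
  refine ⟨fun
    | .zero => none
    | .some x y _ => Option.some (x, decide (e y ≤ e (W.negY x y))), ?_⟩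
  rintro (_ | ⟨x₁, y₁, h₁⟩) (_ | ⟨x₂, y₂, h₂⟩) h
  · rfl
  · simp at h
  · simp at h
  · simp only [Option.some.injEq, Prod.mk.injEq, decide_eq_decide] at h
    obtain ⟨rfl, hside⟩ := h
    rcases W.Y_eq_of_X_eq h₁.1 h₂.1 rfl with rfl | rfl
    · rfl
    · rw [negY_negY] at hside
      have : e y₂ = e (W.negY x₁ y₂) := by
        rcases le_total (e y₂) (e (W.negY x₁ y₂)) with h | h
        · exact le_antisymm h (hside.mpr h)
        · exact le_antisymm (hside.mp h) h
      rw [Point.some.injEq]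
      exact ⟨rfl, (e.injective this).symm⟩

instance [Finite F] : Finite W.Point :=
  have ⟨_, hf⟩ := Point.exists_injective_option_prod_bool W
  Finite.of_injective _ hf

theorem Point.card_le [Finite F] : Nat.card W.Point ≤ 2 * Nat.card F + 1 := by
  obtain ⟨f, hf⟩ := Point.exists_injective_option_prod_bool W
  calc Nat.card W.Point ≤ Nat.card (Option (F × Bool)) := Nat.card_le_card_of_injective f hf
    _ = 2 * Nat.card F + 1 := by simp [Finite.card_option, Nat.card_prod, mul_comm]

variable {W} in
theorem Point.addOrderOf_some_of_Y_eq [DecidableEq F] {x y : F} {h : W.Nonsingular x y}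
    (hy : y = W.negY x y) : addOrderOf (Point.some x y h) = 2 :=
  addOrderOf_eq_prime (by rw [two_nsmul]; exact Point.add_self_of_Y_eq hy) (Point.some_ne_zero h)

end WeierstrassCurve.Affine

theorem two_ne_zero_of_not_isSquare_neg_one {F : Type*} [CommRing F] (h : ¬IsSquare (-1 : F)) :
    (2 : F) ≠ 0 :=
  fun h2 => h ⟨1, by linear_combination -h2⟩

namespace TCurve

open Affine

section CommRing

variable {R : Type} [CommRing R] {t : R}

theorem equation_iff (x y : R) :
    (TCurve t).toAffine.Equation x y ↔ y ^ 2 = x * (x - 1) * (x + t ^ 2) := by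
  rw [Affine.equation_iff]
  simp only [TCurve]
  constructor <;> intro h <;> linear_combination h

theorem negY (x y : R) : (TCurve t).toAffine.negY x y = -y := by
  simp [Affine.negY, TCurve]

end CommRing

variable {F : Type} [Field F] [DecidableEq F] {t : F}

/-- Two instances of the 2-descent identity: `x(2P) - e` is a square for every root `e` of the
cubic. -/
theorem addX_slope_self {x y : F} (he : (TCurve t).toAffine.Equation x y) (hy : y ≠ -y) :
    (TCurve t).toAffine.addX x x ((TCurve t).toAffine.slope x x y y) =
        ((x ^ 2 + t ^ 2) / (2 * y)) ^ 2 ∧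
      (TCurve t).toAffine.addX x x ((TCurve t).toAffine.slope x x y y) - 1 =
        ((x ^ 2 - 2 * x - t ^ 2) / (2 * y)) ^ 2 := by
  have h2y : 2 * y ≠ 0 := fun h => hy (by linear_combination h)
  have h2 : (2 : F) ≠ 0 := left_ne_zero_of_mul h2y
  have hy0 : y ≠ 0 := right_ne_zero_of_mul h2y
  rw [equation_iff] at he
  rw [slope_of_Y_ne rfl (by rwa [negY]), negY, show y - -y = 2 * y by ring]
  simp only [addX, TCurve]
  constructor
  · field_simp
    linear_combination (-4 * (t ^ 2 - 1 + 2 * x)) * he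
  · field_simp
    linear_combination (-4 * (t ^ 2 + 2 * x)) * he

theorem isSquare_of_two_nsmul_eq_some {a b : F} {h : (TCurve t).toAffine.Nonsingular a b}
    {P : (TCurve t).toAffine.Point} (hP : 2 • P = .some a b h) :
    IsSquare a ∧ IsSquare (a - 1) := by
  rw [two_nsmul] at hP
  rcases P with _ | ⟨x, y, hxy⟩
  · exact absurd hP.symm (Point.some_ne_zero h)
  by_cases hy : y = -y
  · rw [Point.add_self_of_Y_eq (by rwa [negY])] at hP
    exact absurd hP.symm (Point.some_ne_zero h)
  rw [Point.add_self_of_Y_ne (by rwa [negY]), Point.some.injEq] at hP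
  obtain ⟨hsq, hsq₁⟩ := addX_slope_self hxy.1 hy
  rw [← hP.1]
  exact ⟨hsq ▸ IsSquare.sq _, hsq₁ ▸ IsSquare.sq _⟩

theorem coords_of_two_nsmul_eq_zero (h2 : (2 : F) ≠ 0) {a b : F}
    {h : (TCurve t).toAffine.Nonsingular a b} (h0 : 2 • Point.some a b h = 0) :
    b = 0 ∧ (a = 0 ∨ a = 1 ∨ a = -t ^ 2) := by
  rw [two_nsmul] at h0
  by_cases hb : b = -b
  · have hb0 : b = 0 := (mul_eq_zero.mp (by linear_combination hb : 2 * b = 0)).resolve_left h2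
    have he := (equation_iff a b).mp h.1
    rw [hb0] at he
    refine ⟨hb0, ?_⟩
    rcases mul_eq_zero.mp (by linear_combination -he : a * (a - 1) * (a + t ^ 2) = 0) with ha | ha
    · rcases mul_eq_zero.mp ha with ha | ha
      · exact .inl ha
      · exact .inr (.inl (by linear_combination ha))
    · exact .inr (.inr (by linear_combination ha))
  · rw [Point.add_self_of_Y_ne (by rwa [negY])] at h0
    exact absurd h0 (Point.some_ne_zero _)

theorem card_ker_two_nsmul_le (h2 : (2 : F) ≠ 0) :
    Nat.card (nsmulAddMonoidHom 2 : (TCurve t).toAffine.Point →+ _).ker ≤ 4 := by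
  classical
  let S : Finset (Option F) := {none, some 0, some 1, some (-t ^ 2)}
  let f : (nsmulAddMonoidHom 2 : (TCurve t).toAffine.Point →+ _).ker → Option F := fun P =>
    match P.1 with
    | .zero => none
    | .some x _ _ => some x
  have hf : Function.Injective f := by
    rintro ⟨_ | ⟨x₁, y₁, h₁⟩, hP₁⟩ ⟨_ | ⟨x₂, y₂, h₂⟩, hP₂⟩ h
    · rfl
    · simp [f] at h
    · simp [f] at h
    · rw [AddMonoidHom.mem_ker, nsmulAddMonoidHom_apply] at hP₁ hP₂
      obtain rfl : x₁ = x₂ := Option.some_injective _ h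
      obtain ⟨rfl, -⟩ := coords_of_two_nsmul_eq_zero h2 hP₁
      obtain ⟨rfl, -⟩ := coords_of_two_nsmul_eq_zero h2 hP₂
      rfl
  have hS : ∀ P, f P ∈ S := by
    rintro ⟨_ | ⟨x, y, h⟩, hP⟩
    · simp [f, S]
    · rw [AddMonoidHom.mem_ker, nsmulAddMonoidHom_apply] at hP
      obtain ⟨-, hx⟩ := coords_of_two_nsmul_eq_zero h2 hP
      rcases hx with rfl | rfl | rfl <;> simp [f, S]
  calc _ ≤ Nat.card S :=
        Nat.card_le_card_of_injective (fun P => ⟨f P, hS P⟩) fun P Q h => hf congr(($h).1)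
    _ = S.card := Nat.card_eq_finsetCard S
    _ ≤ 4 := Finset.card_le_four

theorem two_nsmul_eq_some_one_zero (hns : ¬IsSquare (-1 : F)) (ht : t ≠ 0)
    {P : (TCurve t).toAffine.Point} (hP : addOrderOf (2 • P) = 2)
    (h₁ : (TCurve t).toAffine.Nonsingular 1 0) : 2 • P = .some 1 0 h₁ := by
  rcases hQ : 2 • P with _ | ⟨a, b, h⟩
  · rw [hQ, ← Point.zero_def, addOrderOf_zero] at hP
    exact absurd hP (by norm_num)
  obtain ⟨rfl, ha⟩ := coords_of_two_nsmul_eq_zero (two_ne_zero_of_not_isSquare_neg_one hns)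
    (hQ ▸ hP ▸ addOrderOf_nsmul_eq_zero (2 • P))
  obtain ⟨⟨c, hc⟩, hsq₁⟩ := isSquare_of_two_nsmul_eq_some hQ
  rcases ha with rfl | rfl | rfl
  · exact absurd (by simpa using hsq₁) hns
  · rfl
  · exact absurd ⟨c / t, by field_simp; linear_combination hc⟩ hns

end TCurve

/-- Let `p ≡ 7 (mod 8)` be a prime, `t ∈ F_p` with `t ≠ 0`, and let `E` be the elliptic
curve `y² = x(x-1)(x+t²)` over `F_p`. If `E` is supersingular, then the 2-torsion point
`Q₁ = (1, 0)` is the double of some `F_p`-rational point of `E`. -/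
theorem one_torsion_in_double_of_supersingular (p : ℕ) [Fact p.Prime] (hp : p % 8 = 7)
    (t : ZMod p) (ht : t ≠ 0) (hss : IsSupersingular p (TCurve t)) :
    ∀ h₁ : (TCurve t).toAffine.Nonsingular 1 0,
      ∃ P : (TCurve t).toAffine.Point, 2 • P = WeierstrassCurve.Affine.Point.some _ _ h₁ := by
  intro h₁
  have hns : ¬IsSquare (-1 : ZMod p) := by rw [ZMod.exists_sq_eq_neg_one_iff]; omega
  have hQ₁ := Affine.Point.addOrderOf_some_of_Y_eq (h := h₁) (by rw [TCurve.negY, neg_zero])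
  have h2N : 2 ∣ Nat.card (TCurve t).toAffine.Point := hQ₁ ▸ addOrderOf_dvd_natCard _
  have hN : Nat.card (TCurve t).toAffine.Point = p + 1 :=
    Nat.eq_add_one_of_modEq_one (Fact.out : p.Prime).one_lt hss
      h2N (by simpa using Affine.Point.card_le (TCurve t).toAffine)
  set K := (nsmulAddMonoidHom 2 : (TCurve t).toAffine.Point →+ _).ker
  have hK : Nat.card K ≤ 4 :=
    TCurve.card_ker_two_nsmul_le (two_ne_zero_of_not_isSquare_neg_one hns)
  have hKdvd : Nat.card K ∣ p + 1 := hN ▸ K.card_addSubgroup_dvd_card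
  have hK0 : 0 < Nat.card K := Nat.card_pos
  obtain ⟨P, hP⟩ := exists_addOrderOf_two_nsmul_eq_two (G := (TCurve t).toAffine.Point) (by
    rw [hN]
    interval_cases Nat.card K <;> omega)
  exact ⟨P, TCurve.two_nsmul_eq_some_one_zero hns ht hP h₁⟩
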